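/- Let G be a bidirected tree rooted at a node r, with seed set S and boost set B. For a node v with parent u, let T_v denote the subtree rooted at v, let c_v be the probability that v is activated in T_v (under the live-edge model restricted to T_v, with seeds S ∩ T_v and edge probabilities p^B), and let f_v be the probability that u is activated in G \ T_v (with seeds S \ T_v and edge probabilities p^B); set f_r = 0. Then for every node v (with parent u): ap_B(v) = 1 − (1 − f_v · p^B_{uv})(1 − c_v), and consequently Δ_S(B) = ∑_{v ∈ V} (1 − (1 − f_v · p^B_{uv})(1 − c_v) − ap_∅(v)), where for the root the term f_v · p^B_{uv} is read as 0. -/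

import Mathlib

open Finset
open scoped Classical

noncomputable section

variable {V : Type*}

/-- The probability weight of the live-edge configuration `L ⊆ E`:
each edge `e ∈ E` is independently live with probability `p e`. -/
def edgeWeight [DecidableEq V] (E : Finset (V × V)) (p : V × V → ℝ)
    (L : Finset (V × V)) : ℝ :=
  (∏ e ∈ L, p e) * ∏ e ∈ E \ L, (1 - p e)

/-- `v` is activated in configuration `L`: it is reachable from some seed in `S`
through live (directed) edges. -/
def Reaches (L : Finset (V × V)) (S : Finset V) (v : V) : Prop :=
  ∃ s ∈ S, Relation.ReflTransGen (fun a b => (a, b) ∈ L) s v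

/-- Activation probability of node `v` under the live-edge model with edge set `E`,
edge probabilities `p`, and seed set `S`. -/
def ap [Fintype V] [DecidableEq V] (E : Finset (V × V)) (p : V × V → ℝ)
    (S : Finset V) (v : V) : ℝ :=
  ∑ L ∈ E.powerset, edgeWeight E p L * (if Reaches L S v then 1 else 0)

/-- Expected number of activated nodes lying in the node set `W`. -/
def spreadOn [Fintype V] [DecidableEq V] (E : Finset (V × V)) (p : V × V → ℝ)
    (S W : Finset V) : ℝ :=
  ∑ L ∈ E.powerset, edgeWeight E p L * ((W.filter (fun v => Reaches L S v)).card : ℝ)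

/-- The influence spread `σ_S`: expected total number of activated nodes. -/
def spread [Fintype V] [DecidableEq V] (E : Finset (V × V)) (p : V × V → ℝ)
    (S : Finset V) : ℝ :=
  spreadOn E p S Finset.univ

/-- Boosted edge probabilities: edges pointing into a boosted node use `p'`. -/
def pB (p p' : V × V → ℝ) (B : Finset V) : V × V → ℝ :=
  fun e => if e.2 ∈ B then p' e else p e

/-- The bidirected edge set of an undirected graph: each undirected edge is
replaced by the two directed edges. -/
def treeEdges [Fintype V] [DecidableEq V] (T : SimpleGraph V) [DecidableRel T.Adj] :
    Finset (V × V) :=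
  Finset.univ.filter (fun e => T.Adj e.1 e.2)

/-- `apSub E p S v u` is `ap_B(v\u)`: the activation probability of `v` in the
subtree `G_{v\u}` obtained by removing the directed edges `(u,v)` and `(v,u)`. -/
def apSub [Fintype V] [DecidableEq V] (E : Finset (V × V)) (p : V × V → ℝ)
    (S : Finset V) (v u : V) : ℝ :=
  ap (E \ {(u, v), (v, u)}) p S v

/-- The set of nodes of the connected component containing `v` w.r.t. edge set `E`. -/
def comp [Fintype V] [DecidableEq V] (E : Finset (V × V)) (v : V) : Finset V :=
  Finset.univ.filter (fun w => Relation.ReflTransGen (fun a b => (a, b) ∈ E) v w)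

/-- `gain E p S v u` is `g_B(v\u)`: in the subtree `G_{v\u}`, the expected number of
activated nodes when the seed set is `(S ∩ V(G_{v\u})) ∪ {v}` minus the expected
number when the seed set is `S ∩ V(G_{v\u})`. -/
def gain [Fintype V] [DecidableEq V] (E : Finset (V × V)) (p : V × V → ℝ)
    (S : Finset V) (v u : V) : ℝ :=
  spreadOn (E \ {(u, v), (v, u)}) p (insert v (S ∩ comp (E \ {(u, v), (v, u)}) v))
      (comp (E \ {(u, v), (v, u)}) v)
    - spreadOn (E \ {(u, v), (v, u)}) p (S ∩ comp (E \ {(u, v), (v, u)}) v)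
      (comp (E \ {(u, v), (v, u)}) v)

/-!
Fix `v ≠ r` with parent `u` and condition on the two orientations of the edge `uv`. The edge
`(v, u)` never helps to activate `v`; if `(u, v)` is live, `v` is active iff `u` or `v` is
active in the forest without `uv`. As `uv` is a bridge, the activations of `u` and `v` there
depend on disjoint sets of edges, hence are independent, so
`ap(v) = (1 - p_{uv}) c_v + p_{uv} (1 - (1 - f_v) (1 - c_v))`. The spread is the sum of the
activation probabilities, which gives the second claim.
-/

open Relation

section LiveEdge

variable [DecidableEq V] {E E₁ E₂ L : Finset (V × V)} {p : V × V → ℝ}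

def liveExpect (E : Finset (V × V)) (p : V × V → ℝ) (F : Finset (V × V) → ℝ) : ℝ :=
  ∑ L ∈ E.powerset, edgeWeight E p L * F L

lemma edgeWeight_insert_of_subset {a : V × V} (ha : a ∉ E) (hL : L ⊆ E) :
    edgeWeight (insert a E) p L = (1 - p a) * edgeWeight E p L := by
  rw [edgeWeight, edgeWeight, Finset.insert_sdiff_of_notMem _ fun h => ha (hL h),
    Finset.prod_insert fun h => ha (Finset.mem_sdiff.1 h).1]
  ring

lemma edgeWeight_insert_insert {a : V × V} (ha : a ∉ E) (hL : L ⊆ E) :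
    edgeWeight (insert a E) p (insert a L) = p a * edgeWeight E p L := by
  rw [edgeWeight, edgeWeight, Finset.insert_sdiff_insert, Finset.sdiff_insert_of_notMem ha,
    Finset.prod_insert fun h => ha (hL h)]
  ring

lemma liveExpect_congr {F G : Finset (V × V) → ℝ} (h : ∀ L ⊆ E, F L = G L) :
    liveExpect E p F = liveExpect E p G :=
  Finset.sum_congr rfl fun L hL => by rw [h L (Finset.mem_powerset.1 hL)]

lemma liveExpect_add (F G : Finset (V × V) → ℝ) :
    liveExpect E p (fun L => F L + G L) = liveExpect E p F + liveExpect E p G := by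
  simp only [liveExpect, mul_add, Finset.sum_add_distrib]

lemma liveExpect_sub (F G : Finset (V × V) → ℝ) :
    liveExpect E p (fun L => F L - G L) = liveExpect E p F - liveExpect E p G := by
  simp only [liveExpect, mul_sub, Finset.sum_sub_distrib]

lemma liveExpect_const_mul (c : ℝ) (F : Finset (V × V) → ℝ) :
    liveExpect E p (fun L => c * F L) = c * liveExpect E p F := by
  simp only [liveExpect, Finset.mul_sum]
  exact Finset.sum_congr rfl fun _ _ => by ring

lemma liveExpect_mul_const (c : ℝ) (F : Finset (V × V) → ℝ) :
    liveExpect E p (fun L => F L * c) = liveExpect E p F * c := by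
  simp only [liveExpect, Finset.sum_mul, mul_assoc]

lemma liveExpect_empty (F : Finset (V × V) → ℝ) : liveExpect ∅ p F = F ∅ := by
  simp [liveExpect, edgeWeight]

lemma liveExpect_insert {a : V × V} (ha : a ∉ E) (F : Finset (V × V) → ℝ) :
    liveExpect (insert a E) p F =
      (1 - p a) * liveExpect E p F + p a * liveExpect E p (fun L => F (insert a L)) := by
  rw [liveExpect, Finset.sum_powerset_insert ha, liveExpect, liveExpect, Finset.mul_sum,
    Finset.mul_sum]
  congr 1 <;> refine Finset.sum_congr rfl fun L hL => ?_
  · rw [edgeWeight_insert_of_subset ha (Finset.mem_powerset.1 hL)]; ring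
  · rw [edgeWeight_insert_insert ha (Finset.mem_powerset.1 hL)]; ring

lemma liveExpect_const (E : Finset (V × V)) (c : ℝ) : liveExpect E p (fun _ => c) = c := by
  induction E using Finset.induction_on with
  | empty => exact liveExpect_empty _
  | insert a E ha ih => rw [liveExpect_insert ha, ih]; ring

lemma liveExpect_union (hd : Disjoint E₁ E₂) (F : Finset (V × V) → ℝ) :
    liveExpect (E₁ ∪ E₂) p F =
      liveExpect E₁ p fun L₁ => liveExpect E₂ p fun L₂ => F (L₁ ∪ L₂) := by
  induction E₂ using Finset.induction_on generalizing F with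
  | empty => simp only [Finset.union_empty, liveExpect_empty]
  | insert a E₂ ha ih =>
    have haE₁ : a ∉ E₁ := Finset.disjoint_right.1 hd (Finset.mem_insert_self a E₂)
    have hd' : Disjoint E₁ E₂ := hd.mono_right (Finset.subset_insert a E₂)
    rw [Finset.union_insert, liveExpect_insert (by simp [haE₁, ha]), ih hd', ih hd']
    simp only [liveExpect_insert ha, Finset.union_insert, liveExpect_add, liveExpect_const_mul]

lemma liveExpect_union_eq_mul (hd : Disjoint E₁ E₂) {F G H : Finset (V × V) → ℝ}
    (hF : ∀ L₁ ⊆ E₁, ∀ L₂ ⊆ E₂, F (L₁ ∪ L₂) = G L₁ * H L₂) :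
    liveExpect (E₁ ∪ E₂) p F = liveExpect E₁ p G * liveExpect E₂ p H := by
  rw [liveExpect_union hd, ← liveExpect_mul_const]
  refine liveExpect_congr fun L₁ h₁ => ?_
  rw [← liveExpect_const_mul]
  exact liveExpect_congr fun L₂ h₂ => hF L₁ h₁ L₂ h₂

lemma liveExpect_mul_of_filter (P : V × V → Prop) [DecidablePred P]
    {f g : Finset (V × V) → ℝ} (hf : ∀ L ⊆ E, f (L.filter P) = f L)
    (hg : ∀ L ⊆ E, g (L.filter fun e => ¬ P e) = g L) :
    liveExpect E p (fun L => f L * g L) = liveExpect E p f * liveExpect E p g := by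
  have hE : E.filter P ∪ E.filter (fun e => ¬ P e) = E := Finset.filter_union_filter_not_eq P E
  have hd := Finset.disjoint_filter_filter_not E E P
  have hsplit : ∀ L₁ ⊆ E.filter P, ∀ L₂ ⊆ E.filter (fun e => ¬ P e),
      f (L₁ ∪ L₂) = f L₁ ∧ g (L₁ ∪ L₂) = g L₂ := by
    intro L₁ h₁ L₂ h₂
    have hL : L₁ ∪ L₂ ⊆ E := hE ▸ Finset.union_subset_union h₁ h₂
    have hP₁ : ∀ e ∈ L₁, P e := fun e he => (Finset.mem_filter.1 (h₁ he)).2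
    have hP₂ : ∀ e ∈ L₂, ¬ P e := fun e he => (Finset.mem_filter.1 (h₂ he)).2
    constructor
    · rw [← hf _ hL, Finset.filter_union, Finset.filter_true_of_mem hP₁,
        Finset.filter_false_of_mem hP₂, Finset.union_empty]
    · rw [← hg _ hL, Finset.filter_union, Finset.filter_false_of_mem (by simpa using hP₁),
        Finset.filter_true_of_mem hP₂, Finset.empty_union]
  rw [← hE, liveExpect_union_eq_mul hd (G := f) (H := g) fun L₁ h₁ L₂ h₂ => by
      rw [(hsplit L₁ h₁ L₂ h₂).1, (hsplit L₁ h₁ L₂ h₂).2],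
    liveExpect_union_eq_mul hd (G := f) (H := fun _ => 1) fun L₁ h₁ L₂ h₂ => by
      rw [(hsplit L₁ h₁ L₂ h₂).1, mul_one],
    liveExpect_union_eq_mul hd (G := fun _ => 1) (H := g) fun L₁ h₁ L₂ h₂ => by
      rw [(hsplit L₁ h₁ L₂ h₂).2, one_mul],
    liveExpect_const, liveExpect_const, mul_one, one_mul]

end LiveEdge

section Reachability

variable {L L' : Finset (V × V)} {S : Finset V}

lemma Reaches.mono (h : L ⊆ L') {v : V} (hv : Reaches L S v) : Reaches L' S v :=
  let ⟨s, hs, hsv⟩ := hv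
  ⟨s, hs, ReflTransGen.mono (fun _ _ hab => h hab) _ _ hsv⟩

lemma reaches_filter_iff (P : V × V → Prop) [DecidablePred P] {w : V}
    (hP : ∀ e ∈ L, ReflTransGen (fun x y => (x, y) ∈ L) e.1 w → P e) :
    Reaches (L.filter P) S w ↔ Reaches L S w := by
  refine ⟨Reaches.mono (Finset.filter_subset _ _), ?_⟩
  rintro ⟨s, hs, h⟩
  refine ⟨s, hs, ?_⟩
  clear hs
  induction h using ReflTransGen.head_induction_on with
  | refl => exact .refl
  | head hstep hrest ih =>
    exact ih.head (Finset.mem_filter.2 ⟨hstep, hP _ hstep (hrest.head hstep)⟩)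

variable [DecidableEq V]

lemma reflTransGen_insert_cases {a b s w : V}
    (h : ReflTransGen (fun x y => (x, y) ∈ insert (a, b) L) s w) :
    ReflTransGen (fun x y => (x, y) ∈ L) s w ∨
      ReflTransGen (fun x y => (x, y) ∈ L) s a ∧ ReflTransGen (fun x y => (x, y) ∈ L) b w := by
  induction h with
  | refl => exact Or.inl .refl
  | tail _ hstep ih =>
    rcases Finset.mem_insert.1 hstep with hab | hstep
    · obtain ⟨rfl, rfl⟩ := Prod.mk.inj hab
      exact Or.inr ⟨ih.elim id And.left, .refl⟩
    · exact ih.imp (·.tail hstep) fun h => ⟨h.1, h.2.tail hstep⟩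

lemma reaches_insert_fst {a b : V} : Reaches (insert (a, b) L) S a ↔ Reaches L S a :=
  ⟨fun ⟨s, hs, h⟩ => ⟨s, hs, (reflTransGen_insert_cases h).elim id And.left⟩,
    Reaches.mono (Finset.subset_insert _ _)⟩

lemma reaches_insert_snd {a b : V} :
    Reaches (insert (a, b) L) S b ↔ Reaches L S a ∨ Reaches L S b := by
  constructor
  · rintro ⟨s, hs, h⟩
    exact (reflTransGen_insert_cases h).symm.imp (fun h => ⟨s, hs, h.1⟩) fun h => ⟨s, hs, h⟩
  · rintro (⟨s, hs, h⟩ | h)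
    · exact ⟨s, hs, (ReflTransGen.mono (fun _ _ hxy => Finset.mem_insert_of_mem hxy) _ _ h).tail
        (Finset.mem_insert_self _ _)⟩
    · exact h.mono (Finset.subset_insert _ _)

end Reachability

section ActivationProbability

variable [Fintype V] [DecidableEq V] {E : Finset (V × V)} {q : V × V → ℝ} {S : Finset V}

lemma ap_eq_liveExpect (v : V) :
    ap E q S v = liveExpect E q fun L => if Reaches L S v then 1 else 0 := rfl

lemma ap_insert_fst {a b : V} (hab : (a, b) ∉ E) :
    ap (insert (a, b) E) q S a = ap E q S a := by
  simp only [ap_eq_liveExpect, liveExpect_insert hab, reaches_insert_fst]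
  ring

lemma ap_insert_snd {a b : V} (hab : (a, b) ∉ E) :
    ap (insert (a, b) E) q S b = (1 - q (a, b)) * ap E q S b +
      q (a, b) * liveExpect E q fun L => if Reaches L S a ∨ Reaches L S b then 1 else 0 := by
  simp only [ap_eq_liveExpect, liveExpect_insert hab, reaches_insert_snd]

/-- The activations of `u` and `v` depend on disjoint sets of edges: those whose source
reaches `u`, and the others. -/
lemma liveExpect_reaches_or (hsymm : ∀ a b, (a, b) ∈ E → (b, a) ∈ E) {u v : V}
    (hsep : ¬ ReflTransGen (fun a b => (a, b) ∈ E) u v) :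
    (liveExpect E q fun L => if Reaches L S u ∨ Reaches L S v then 1 else 0) =
      1 - (1 - ap E q S u) * (1 - ap E q S v) := by
  let P : V × V → Prop := fun e => ReflTransGen (fun a b => (a, b) ∈ E) e.1 u
  have hu : ∀ L ⊆ E, Reaches (L.filter P) S u ↔ Reaches L S u := fun L hL =>
    reaches_filter_iff P fun _ _ h => ReflTransGen.mono (fun _ _ hxy => hL hxy) _ _ h
  have hv : ∀ L ⊆ E, Reaches (L.filter fun e => ¬ P e) S v ↔ Reaches L S v := by
    refine fun L hL => reaches_filter_iff _ fun e _ h hPe => hsep ?_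
    have hrev : ReflTransGen (fun a b => (a, b) ∈ E) u e.1 := by
      have : Std.Symm fun a b : V => (a, b) ∈ E := ⟨hsymm⟩
      exact Std.Symm.symm _ _ hPe
    exact hrev.trans (ReflTransGen.mono (fun _ _ hxy => hL hxy) _ _ h)
  calc (liveExpect E q fun L => if Reaches L S u ∨ Reaches L S v then 1 else 0)
      = liveExpect E q fun L =>
          1 - (1 - if Reaches L S u then 1 else 0) * (1 - if Reaches L S v then 1 else 0) :=
        liveExpect_congr fun L _ => by split_ifs <;> simp_all
    _ = 1 - (1 - ap E q S u) * (1 - ap E q S v) := by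
        rw [liveExpect_sub, liveExpect_const,
          liveExpect_mul_of_filter P (fun L hL => by rw [hu L hL]) fun L hL => by rw [hv L hL],
          liveExpect_sub, liveExpect_sub, liveExpect_const, ap_eq_liveExpect, ap_eq_liveExpect]

lemma spread_eq_sum_ap (E : Finset (V × V)) (p : V × V → ℝ) (S : Finset V) :
    spread E p S = ∑ v : V, ap E p S v := by
  simp only [spread, spreadOn, ap, Finset.card_filter, Nat.cast_sum, Nat.cast_ite,
    Nat.cast_one, Nat.cast_zero, Finset.mul_sum]
  exact Finset.sum_comm

end ActivationProbability

section Tree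

variable [Fintype V] [DecidableEq V] {T : SimpleGraph V} [DecidableRel T.Adj] {u v : V}

lemma treeEdges_sdiff_symm (a b : V) (h : (a, b) ∈ treeEdges T \ {(u, v), (v, u)}) :
    (b, a) ∈ treeEdges T \ {(u, v), (v, u)} := by
  simp only [treeEdges, Finset.mem_sdiff, Finset.mem_filter, Finset.mem_univ, true_and,
    Finset.mem_insert, Finset.mem_singleton, Prod.mk.injEq] at h ⊢
  exact ⟨h.1.symm, by tauto⟩

lemma not_reflTransGen_treeEdges_sdiff (hT : T.IsTree) (huv : T.Adj u v) :
    ¬ ReflTransGen (fun a b => (a, b) ∈ treeEdges T \ {(u, v), (v, u)}) u v := by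
  intro h
  refine SimpleGraph.isBridge_iff.1
    (SimpleGraph.isAcyclic_iff_forall_adj_isBridge.1 hT.isAcyclic huv) ?_
  rw [SimpleGraph.reachable_iff_reflTransGen]
  refine ReflTransGen.mono (fun a b hab => ?_) _ _ h
  simp only [treeEdges, Finset.mem_sdiff, Finset.mem_filter, Finset.mem_univ, true_and,
    Finset.mem_insert, Finset.mem_singleton, Prod.mk.injEq] at hab
  simp only [SimpleGraph.deleteEdges_adj, Set.mem_singleton_iff, Sym2.eq_iff]
  exact ⟨hab.1, by tauto⟩

lemma ap_treeEdges_eq (hT : T.IsTree) (q : V × V → ℝ) (S : Finset V) (huv : T.Adj u v) :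
    ap (treeEdges T) q S v =
      1 - (1 - apSub (treeEdges T) q S u v * q (u, v)) * (1 - apSub (treeEdges T) q S v u) := by
  set E' := treeEdges T \ {(u, v), (v, u)} with hE'
  have hne : (u, v) ≠ (v, u) := fun h => huv.ne (congrArg Prod.fst h)
  have huvE' : (u, v) ∉ E' := by simp [E']
  have hvuE' : (v, u) ∉ insert (u, v) E' := by simp [E', hne.symm]
  have hE : treeEdges T = insert (v, u) (insert (u, v) E') := by
    ext e
    by_cases h₁ : e = (u, v) <;> by_cases h₂ : e = (v, u) <;>
      simp [E', treeEdges, h₁, h₂, huv, huv.symm]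
  have hapSub : apSub (treeEdges T) q S u v = ap E' q S u := by
    rw [apSub, Finset.pair_comm]
  rw [hapSub, apSub, ← hE', hE, ap_insert_fst hvuE', ap_insert_snd huvE',
    liveExpect_reaches_or treeEdges_sdiff_symm (not_reflTransGen_treeEdges_sdiff hT huv)]
  ring

end Tree

theorem ap_decomposition_rooted_general [Fintype V] [DecidableEq V]
    (T : SimpleGraph V) [DecidableRel T.Adj] (hT : T.IsTree)
    (p p' : V × V → ℝ)
    (r : V) (parent : V → V) (hpar : ∀ v, v ≠ r → T.Adj (parent v) v)
    (S B : Finset V) :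
    (∀ v, v ≠ r →
      ap (treeEdges T) (pB p p' B) S v =
        1 - (1 - apSub (treeEdges T) (pB p p' B) S (parent v) v
                  * pB p p' B (parent v, v))
            * (1 - apSub (treeEdges T) (pB p p' B) S v (parent v))) ∧
    spread (treeEdges T) (pB p p' B) S - spread (treeEdges T) p S =
      ∑ v : V,
        ((if v = r then ap (treeEdges T) (pB p p' B) S v
          else 1 - (1 - apSub (treeEdges T) (pB p p' B) S (parent v) v
                        * pB p p' B (parent v, v))
                 * (1 - apSub (treeEdges T) (pB p p' B) S v (parent v)))
          - ap (treeEdges T) p S v) := by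
  have hap := fun v hv => ap_treeEdges_eq hT (pB p p' B) S (hpar v hv)
  refine ⟨hap, ?_⟩
  rw [spread_eq_sum_ap, spread_eq_sum_ap, ← Finset.sum_sub_distrib]
  refine Finset.sum_congr rfl fun v _ => ?_
  split_ifs with hv
  · rfl
  · rw [← hap v hv]

/-- On a bidirected tree rooted at `r` (with `parent v` adjacent to `v` for every
`v ≠ r`), writing `c_v = ap_B(v\parent v)` (the probability that `v` is activated
in the subtree `T_v`) and `f_v = ap_B(parent v \ v)` (the probability that the
parent of `v` is activated in `G \ T_v`), with `f_r = 0`, one has for every node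
`v ≠ r`:
`ap_B(v) = 1 − (1 − f_v · p^B_{parent v, v}) · (1 − c_v)`,
and consequently
`Δ_S(B) = ∑_{v ∈ V} (1 − (1 − f_v · p^B_{parent v, v})(1 − c_v) − ap_∅(v))`,
where for the root the term `f_v · p^B_{uv}` is read as `0` (so the root's term
is `ap_B(r) − ap_∅(r)`). -/
theorem ap_decomposition_rooted [Fintype V] [DecidableEq V]
    (T : SimpleGraph V) [DecidableRel T.Adj] (hT : T.IsTree)
    (p p' : V × V → ℝ)
    (hp0 : ∀ e, 0 ≤ p e) (hpp' : ∀ e, p e ≤ p' e) (hp'1 : ∀ e, p' e ≤ 1)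
    (r : V) (parent : V → V) (hpar : ∀ v, v ≠ r → T.Adj (parent v) v)
    (S B : Finset V) :
    (∀ v, v ≠ r →
      ap (treeEdges T) (pB p p' B) S v =
        1 - (1 - apSub (treeEdges T) (pB p p' B) S (parent v) v
                  * pB p p' B (parent v, v))
            * (1 - apSub (treeEdges T) (pB p p' B) S v (parent v))) ∧
    spread (treeEdges T) (pB p p' B) S - spread (treeEdges T) p S =
      ∑ v : V,
        ((if v = r then ap (treeEdges T) (pB p p' B) S v
          else 1 - (1 - apSub (treeEdges T) (pB p p' B) S (parent v) v
                        * pB p p' B (parent v, v))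
                 * (1 - apSub (treeEdges T) (pB p p' B) S v (parent v)))
          - ap (treeEdges T) p S v) :=
  ap_decomposition_rooted_general T hT p p' r parent hpar S B
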